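/- Let A be a discrete 1-form on ℤ⁴, let h be a discrete 0-form with h_k ∈ SU(2) for all k satisfying h_{τ₁τ₂ k} = h_{τ₃τ₄ k}, h_{τ₁τ₃ k} = h_{τ₂τ₄ k}, h_{τ₁τ₄ k} = h_{τ₂τ₃ k} for all k, and let A' = h∪d^ch⁻¹ + h∪A∪h⁻¹. Then the curvatures F = d^cA + A∪A and F' = d^cA' + A'∪A' satisfy T F' = h ∪ TF ∪ h⁻¹. -/
import Mathlib


open Matrix

noncomputable section

namespace DiscreteYM

/-- Points of the combinatorial model of ℝ⁴ (vertices of ℤ⁴). -/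
abbrev Pt : Type := Fin 4 → ℤ

/-- 2×2 complex matrices, the coefficient algebra gl(2,ℂ). -/
abbrev Mat : Type := Matrix (Fin 2) (Fin 2) ℂ

/-- A discrete form on ℤ⁴: to each point `k` and each subset `S ⊆ {1,2,3,4}` a matrix.
A discrete `p`-form is such a function regarded through its values at `p`-element subsets. -/
abbrev DForm : Type := Pt → Finset (Fin 4) → Mat

/-- `shift S k` is `τ_S k`: the point `k` with each coordinate indexed by `S` increased by 1. -/
def shift (S : Finset (Fin 4)) (k : Pt) : Pt :=
  fun i => if i ∈ S then k i + 1 else k i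

/-- `ε(S) = (−1)^{|{(i,j) ∈ S×Sᶜ : j < i}|}`, the sign of the permutation of `(1,2,3,4)`
obtained by listing `S` in increasing order followed by `Sᶜ` in increasing order. -/
def sgn (S : Finset (Fin 4)) : ℤ :=
  (-1) ^ (((S ×ˢ Sᶜ).filter fun p => p.2 < p.1).card)

/-- The sign `(−1)^{|{(i,j) ∈ S₁×S₂ : j < i}|}` appearing in the cup product. -/
def sgnPair (S₁ S₂ : Finset (Fin 4)) : ℤ :=
  (-1) ^ (((S₁ ×ˢ S₂).filter fun p => p.2 < p.1).card)

/-- The combinatorial Hodge star `T`: `(Tφ)_k^{Sᶜ} = ε(S) φ_k^S`. -/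
def hodge (φ : DForm) : DForm :=
  fun k S => sgn Sᶜ • φ k Sᶜ

/-- The coboundary operator `d^c`:
`(d^cφ)_k^S = Σ_{i∈S} (−1)^{|{j∈S : j<i}|} (φ_{τ_i k}^{S∖{i}} − φ_k^{S∖{i}})`. -/
def dc (φ : DForm) : DForm :=
  fun k S => ∑ i ∈ S, ((-1 : ℤ) ^ ((S.filter fun j => j < i).card)) •
    (φ (shift {i} k) (S.erase i) - φ k (S.erase i))

/-- The cup product `φ∪ψ` of a `p`-form `φ` with a form `ψ`:
`(φ∪ψ)_k^S = Σ_{S₁⊔S₂=S, |S₁|=p} (−1)^{|{(i,j)∈S₁×S₂ : j<i}|} φ_k^{S₁} ψ_{τ_{S₁}k}^{S₂}`. -/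
def cup (p : ℕ) (φ ψ : DForm) : DForm :=
  fun k S => ∑ S₁ ∈ S.powerset.filter (fun T => T.card = p),
    sgnPair S₁ (S \ S₁) • (φ k S₁ * ψ (shift S₁ k) (S \ S₁))

/-- The discrete curvature 2-form `F = d^cA + A∪A` of a discrete 1-form `A`. -/
def curv (A : DForm) : DForm := dc A + cup 1 A A

/-- Cup product of a 0-form `g` with a form: `(g∪φ)_k^S = g_k φ_k^S`. -/
def lcup (g : Pt → Mat) (φ : DForm) : DForm := fun k S => g k * φ k S

/-- Cup product of a form with a 0-form `g`: `(φ∪g)_k^S = φ_k^S g_{τ_S k}`. -/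
def rcup (φ : DForm) (g : Pt → Mat) : DForm := fun k S => φ k S * g (shift S k)

/-- Coboundary of a 0-form `g`; in particular `(d^c g)_k^{i} = g_{τ_i k} − g_k`. -/
def dc0 (g : Pt → Mat) : DForm :=
  fun k S => ∑ i ∈ S, ((-1 : ℤ) ^ ((S.filter fun j => j < i).card)) •
    (g (shift {i} k) - g k)


/-- Conditions (4.17) on a 0-form `h`:
`h_{τ₁τ₂k} = h_{τ₃τ₄k}`, `h_{τ₁τ₃k} = h_{τ₂τ₄k}`, `h_{τ₁τ₄k} = h_{τ₂τ₃k}` for all `k`. -/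
def Cond417 (h : Pt → Mat) : Prop :=
  ∀ k : Pt,
    h (shift {0, 1} k) = h (shift {2, 3} k)
    ∧ h (shift {0, 2} k) = h (shift {1, 3} k)
    ∧ h (shift {0, 3} k) = h (shift {1, 2} k)


lemma erase_left {i j : Fin 4} (hij : i ≠ j) : ({i,j} : Finset (Fin 4)).erase i = {j} := by
  rw [Finset.erase_insert (by simp [hij])]

lemma erase_right {i j : Fin 4} (hij : i ≠ j) : ({i,j} : Finset (Fin 4)).erase j = {i} := by
  rw [Finset.erase_insert_of_ne hij, Finset.erase_singleton]; simp

lemma filter_lt_left {i j : Fin 4} (hij : i < j) :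
    (({i,j} : Finset (Fin 4)).filter fun x => x < i) = ∅ := by
  rw [Finset.filter_eq_empty_iff]
  rintro x hx
  rcases Finset.mem_insert.1 hx with rfl | hx
  · exact lt_irrefl _
  · rw [Finset.mem_singleton] at hx; subst hx; exact hij.asymm

lemma filter_lt_right {i j : Fin 4} (hij : i < j) :
    (({i,j} : Finset (Fin 4)).filter fun x => x < j) = {i} := by
  ext x
  simp only [Finset.mem_filter, Finset.mem_insert, Finset.mem_singleton]
  constructor
  · rintro ⟨rfl | rfl, hlt⟩
    · rfl
    · exact absurd hlt (lt_irrefl _)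
  · rintro rfl; exact ⟨Or.inl rfl, hij⟩

lemma powerset_pair {i j : Fin 4} (hij : i ≠ j) :
    (({i,j} : Finset (Fin 4)).powerset.filter fun T => T.card = 1) = {{i},{j}} := by
  ext T
  simp only [Finset.mem_filter, Finset.mem_powerset, Finset.card_eq_one, Finset.mem_insert,
    Finset.mem_singleton]
  constructor
  · rintro ⟨hsub, a, rfl⟩
    rcases Finset.mem_insert.1 (hsub (Finset.mem_singleton_self a)) with rfl | ha
    · exact Or.inl rfl
    · rw [Finset.mem_singleton] at ha; subst ha; exact Or.inr rfl
  · rintro (rfl | rfl)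
    · exact ⟨by simp, ⟨i, rfl⟩⟩
    · exact ⟨by simp, ⟨j, rfl⟩⟩

lemma sdiff_left {i j : Fin 4} (hij : i ≠ j) : ({i,j} : Finset (Fin 4)) \ {i} = {j} := by
  rw [Finset.sdiff_singleton_eq_erase, erase_left hij]

lemma sdiff_right {i j : Fin 4} (hij : i ≠ j) : ({i,j} : Finset (Fin 4)) \ {j} = {i} := by
  rw [Finset.sdiff_singleton_eq_erase, erase_right hij]

lemma sgnPair_lt {i j : Fin 4} (hij : i < j) : sgnPair {i} {j} = 1 := by
  rw [sgnPair, Finset.singleton_product_singleton, Finset.filter_singleton]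
  simp [hij.asymm]

lemma sgnPair_gt {i j : Fin 4} (hij : i < j) : sgnPair {j} {i} = -1 := by
  rw [sgnPair, Finset.singleton_product_singleton, Finset.filter_singleton]
  simp [hij]

lemma core (h0 hi hj h2 Ai Aj Aij Aji : Mat)
    (inv00 : h0 * h0⁻¹ = 1) (invi : hi * hi⁻¹ = 1) (invi' : hi⁻¹ * hi = 1)
    (invj : hj * hj⁻¹ = 1) (invj' : hj⁻¹ * hj = 1) :
    ((hi * (h2⁻¹ - hi⁻¹) + (hi * Aij) * h2⁻¹) - (h0 * (hj⁻¹ - h0⁻¹) + (h0 * Aj) * hj⁻¹))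
      - ((hj * (h2⁻¹ - hj⁻¹) + (hj * Aji) * h2⁻¹) - (h0 * (hi⁻¹ - h0⁻¹) + (h0 * Ai) * hi⁻¹))
      + ((h0 * (hi⁻¹ - h0⁻¹) + (h0 * Ai) * hi⁻¹) * (hi * (h2⁻¹ - hi⁻¹) + (hi * Aij) * h2⁻¹)
        - (h0 * (hj⁻¹ - h0⁻¹) + (h0 * Aj) * hj⁻¹) * (hj * (h2⁻¹ - hj⁻¹) + (hj * Aji) * h2⁻¹))
    = h0 * (((Aij - Aj) - (Aji - Ai)) + (Ai * Aij - Aj * Aji)) * h2⁻¹ := by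
  have ei : (1 : Mat) + (h0 * (hi⁻¹ - h0⁻¹) + (h0 * Ai) * hi⁻¹) = h0 * (1 + Ai) * hi⁻¹ := by
    rw [mul_sub, inv00]; noncomm_ring
  have ej : (1 : Mat) + (h0 * (hj⁻¹ - h0⁻¹) + (h0 * Aj) * hj⁻¹) = h0 * (1 + Aj) * hj⁻¹ := by
    rw [mul_sub, inv00]; noncomm_ring
  have eij : (1 : Mat) + (hi * (h2⁻¹ - hi⁻¹) + (hi * Aij) * h2⁻¹) = hi * (1 + Aij) * h2⁻¹ := by
    rw [mul_sub, invi]; noncomm_ring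
  have eji : (1 : Mat) + (hj * (h2⁻¹ - hj⁻¹) + (hj * Aji) * h2⁻¹) = hj * (1 + Aji) * h2⁻¹ := by
    rw [mul_sub, invj]; noncomm_ring
  have key : ∀ Bi Bj Bij Bji : Mat,
      ((Bij - Bj) - (Bji - Bi) + (Bi * Bij - Bj * Bji))
        = ((1 + Bi) * (1 + Bij) - (1 + Bj) * (1 + Bji)) := by
    intro Bi Bj Bij Bji; noncomm_ring
  have goal2 := key (h0 * (hi⁻¹ - h0⁻¹) + (h0 * Ai) * hi⁻¹)
      (h0 * (hj⁻¹ - h0⁻¹) + (h0 * Aj) * hj⁻¹)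
      (hi * (h2⁻¹ - hi⁻¹) + (hi * Aij) * h2⁻¹)
      (hj * (h2⁻¹ - hj⁻¹) + (hj * Aji) * h2⁻¹)
  calc _ = _ := goal2
    _ = (h0 * (1 + Ai) * hi⁻¹) * (hi * (1 + Aij) * h2⁻¹)
          - (h0 * (1 + Aj) * hj⁻¹) * (hj * (1 + Aji) * h2⁻¹) := by rw [← ei, ← ej, ← eij, ← eji]
    _ = h0 * ((1 + Ai) * (1 + Aij)) * h2⁻¹ - h0 * ((1 + Aj) * (1 + Aji)) * h2⁻¹ := by
          have c : ∀ X Y : Mat, ∀ u u' : Mat, u⁻¹ * u = 1 →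
              (h0 * X * u⁻¹) * (u * Y * h2⁻¹) = h0 * (X * Y) * h2⁻¹ := by
            intro X Y u u' hu
            calc (h0 * X * u⁻¹) * (u * Y * h2⁻¹) = h0 * X * (u⁻¹ * u) * (Y * h2⁻¹) := by
                  noncomm_ring
              _ = h0 * (X * Y) * h2⁻¹ := by rw [hu]; noncomm_ring
          rw [c _ _ hi hi invi', c _ _ hj hj invj']
    _ = _ := by noncomm_ring

lemma dc0_single (g : Pt → Mat) (k : Pt) (m : Fin 4) :
    dc0 g k {m} = g (shift {m} k) - g k := by
  rw [dc0, Finset.sum_singleton]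
  simp [Finset.filter_singleton]

lemma shift_shift {i j : Fin 4} (hij : i ≠ j) (k : Pt) :
    shift {j} (shift {i} k) = shift ({i,j} : Finset (Fin 4)) k := by
  funext x
  by_cases hxi : x = i <;> by_cases hxj : x = j <;>
    simp [shift, hxi, hxj, hij, Ne.symm hij]

lemma curv_eval (φ : DForm) (k : Pt) {i j : Fin 4} (hij : i < j) :
    curv φ k {i, j} =
      ((φ (shift {i} k) {j} - φ k {j}) - (φ (shift {j} k) {i} - φ k {i}))
        + (φ k {i} * φ (shift {i} k) {j} - φ k {j} * φ (shift {j} k) {i}) := by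
  have hne : i ≠ j := hij.ne
  simp only [curv, Pi.add_apply, dc, cup]
  rw [Finset.sum_pair hne, powerset_pair hne,
    Finset.sum_pair (by simpa using hne), erase_left hne, erase_right hne,
    filter_lt_left hij, filter_lt_right hij, sdiff_left hne, sdiff_right hne,
    sgnPair_lt hij, sgnPair_gt hij]
  simp only [Finset.card_empty, Finset.card_singleton, pow_zero, pow_one, one_smul,
    neg_one_smul, neg_smul]
  abel

lemma gauge_pair (A : DForm) (h : Pt → Mat)
    (hinv : ∀ k, h k * (h k)⁻¹ = 1 ∧ (h k)⁻¹ * h k = 1)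
    (k : Pt) {i j : Fin 4} (hij : i < j) :
    curv (lcup h (dc0 (fun k => (h k)⁻¹)) + rcup (lcup h A) (fun k => (h k)⁻¹)) k {i, j}
      = h k * curv A k {i, j} * (h (shift {i,j} k))⁻¹ := by
  have hne : i ≠ j := hij.ne
  rw [curv_eval _ k hij, curv_eval A k hij]
  simp only [Pi.add_apply, lcup, rcup, dc0_single]
  rw [shift_shift hne, shift_shift (Ne.symm hne)]
  rw [show ({j,i} : Finset (Fin 4)) = {i,j} from Finset.pair_comm j i]
  exact core (h k) (h (shift {i} k)) (h (shift {j} k)) (h (shift ({i,j} : Finset (Fin 4)) k))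
    (A k {i}) (A k {j}) (A (shift {i} k) {j}) (A (shift {j} k) {i})
    (hinv k).1 (hinv _).1 (hinv _).2 (hinv _).1 (hinv _).2

/-- for an `SU(2)`-valued 0-form `h` satisfying (4.17) and
`A' = h∪d^ch⁻¹ + h∪A∪h⁻¹`, the curvatures satisfy `TF' = h∪TF∪h⁻¹`
(an identity of 2-forms). -/
theorem hodge_curv_gauge (A : DForm) (h : Pt → Mat)
    (hSU : ∀ k, h k ∈ Matrix.unitaryGroup (Fin 2) ℂ ∧ (h k).det = 1)
    (h417 : Cond417 h)
    (A' : DForm)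
    (hA' : A' = lcup h (dc0 (fun k => (h k)⁻¹)) + rcup (lcup h A) (fun k => (h k)⁻¹))
    (k : Pt) (S : Finset (Fin 4)) (hS : S.card = 2) :
    hodge (curv A') k S = rcup (lcup h (hodge (curv A))) (fun k => (h k)⁻¹) k S := by
  have hinv : ∀ k', h k' * (h k')⁻¹ = 1 ∧ (h k')⁻¹ * h k' = 1 := fun k' =>
    ⟨Matrix.mul_nonsing_inv _ (by simp [(hSU k').2]),
     Matrix.nonsing_inv_mul _ (by simp [(hSU k').2])⟩
  subst hA'
  have hcases : ∀ T : Finset (Fin 4), T.card = 2 →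
      T = {0,1} ∨ T = {0,2} ∨ T = {0,3} ∨ T = {1,2} ∨ T = {1,3} ∨ T = {2,3} := by decide
  simp only [hodge, rcup, lcup]
  rcases hcases S hS with rfl | rfl | rfl | rfl | rfl | rfl
  · rw [show ({0,1} : Finset (Fin 4))ᶜ = {2,3} from by decide,
      gauge_pair A h hinv k (show (2:Fin 4) < 3 from by decide), ← (h417 k).1]
    simp only [mul_smul_comm, smul_mul_assoc]
  · rw [show ({0,2} : Finset (Fin 4))ᶜ = {1,3} from by decide,
      gauge_pair A h hinv k (show (1:Fin 4) < 3 from by decide), ← (h417 k).2.1]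
    simp only [mul_smul_comm, smul_mul_assoc]
  · rw [show ({0,3} : Finset (Fin 4))ᶜ = {1,2} from by decide,
      gauge_pair A h hinv k (show (1:Fin 4) < 2 from by decide), ← (h417 k).2.2]
    simp only [mul_smul_comm, smul_mul_assoc]
  · rw [show ({1,2} : Finset (Fin 4))ᶜ = {0,3} from by decide,
      gauge_pair A h hinv k (show (0:Fin 4) < 3 from by decide), (h417 k).2.2]
    simp only [mul_smul_comm, smul_mul_assoc]
  · rw [show ({1,3} : Finset (Fin 4))ᶜ = {0,2} from by decide,
      gauge_pair A h hinv k (show (0:Fin 4) < 2 from by decide), (h417 k).2.1]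
    simp only [mul_smul_comm, smul_mul_assoc]
  · rw [show ({2,3} : Finset (Fin 4))ᶜ = {0,1} from by decide,
      gauge_pair A h hinv k (show (0:Fin 4) < 1 from by decide), (h417 k).1]
    simp only [mul_smul_comm, smul_mul_assoc]


end DiscreteYM

end
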